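/- arXiv:1810.11355 — 2 statements merged into one kernel-verified Lean document; each statement's English description precedes it below -/
import Mathlib

section
/- In the calculus consisting solely of the rule Repl₁⁻, the rule Repl⁻ is derivable: for every atomic formula P, terms s and r, variable v not occurring in s or r, and finite multisets Γ, Δ of formulas, the sequent s = r, P[v/s], Γ ⇒ Δ can be obtained from the sequent s = r, P[v/r], Γ ⇒ Δ by finitely many applications of the rule Repl₁⁻ (the number of applications being the number of occurrences of v in P). -/
open FirstOrder Language Multiset

universe u v

variable {L : FirstOrder.Language.{u, v}}

/-- Number of occurrences of the variable `v` in a term. -/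
def tCount (v : ℕ) : L.Term ℕ → ℕ
  | .var w => if w = v then 1 else 0
  | .func _ ts => Finset.univ.sum fun i => tCount v (ts i)

/-- First-order formulas over the language `L` (with built-in equality),
with natural numbers as variables. -/
inductive Fm (L : FirstOrder.Language.{u, v}) : Type (max u v) where
  | falsum : Fm L
  | equal : L.Term ℕ → L.Term ℕ → Fm L
  | rel {l : ℕ} : L.Relations l → (Fin l → L.Term ℕ) → Fm L
  | and : Fm L → Fm L → Fm L
  | or : Fm L → Fm L → Fm L
  | imp : Fm L → Fm L → Fm L
  | all : ℕ → Fm L → Fm L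
  | ex : ℕ → Fm L → Fm L

namespace Fm

/-- Atomic formulas: equalities and relational atoms. -/
inductive IsAtomic : Fm L → Prop where
  | equal (t₁ t₂ : L.Term ℕ) : (Fm.equal t₁ t₂).IsAtomic
  | rel {l : ℕ} (R : L.Relations l) (ts : Fin l → L.Term ℕ) : (Fm.rel R ts).IsAtomic

/-- Number of free occurrences of the variable `v` in a formula. -/
def fCount (v : ℕ) : Fm L → ℕ
  | falsum => 0
  | equal t₁ t₂ => tCount v t₁ + tCount v t₂
  | rel _ ts => Finset.univ.sum fun i => tCount v (ts i)
  | and A B => fCount v A + fCount v B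
  | or A B => fCount v A + fCount v B
  | imp A B => fCount v A + fCount v B
  | all y A => if y = v then 0 else fCount v A
  | ex y A => if y = v then 0 else fCount v A

/-- The set of free variables of a formula. -/
def freeVars : Fm L → Set ℕ
  | falsum => ∅
  | equal t₁ t₂ => {w | tCount w t₁ ≠ 0 ∨ tCount w t₂ ≠ 0}
  | rel _ ts => {w | ∃ i, tCount w (ts i) ≠ 0}
  | and A B => A.freeVars ∪ B.freeVars
  | or A B => A.freeVars ∪ B.freeVars
  | imp A B => A.freeVars ∪ B.freeVars
  | all y A => A.freeVars \ {y}
  | ex y A => A.freeVars \ {y}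

/-- Simultaneous substitution of terms for the free variables of a formula. -/
def ssub (σ : ℕ → L.Term ℕ) : Fm L → Fm L
  | falsum => falsum
  | equal t₁ t₂ => equal (t₁.subst σ) (t₂.subst σ)
  | rel R ts => rel R fun i => (ts i).subst σ
  | and A B => and (A.ssub σ) (B.ssub σ)
  | or A B => or (A.ssub σ) (B.ssub σ)
  | imp A B => imp (A.ssub σ) (B.ssub σ)
  | all y A => all y (A.ssub (Function.update σ y (Term.var y)))
  | ex y A => ex y (A.ssub (Function.update σ y (Term.var y)))

/-- `A.subst v t` is `A[v/t]`, the substitution of the term `t`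
for the variable `v` in `A`. -/
def subst (v : ℕ) (t : L.Term ℕ) (A : Fm L) : Fm L :=
  A.ssub (Function.update (Term.var : ℕ → L.Term ℕ) v t)

/-- `t` is free for `x` in `A` (no free occurrence of `x` lies in the scope of a
quantifier binding a variable of `t`). -/
def freeFor (t : L.Term ℕ) (x : ℕ) : Fm L → Prop
  | falsum => True
  | equal _ _ => True
  | rel _ _ => True
  | and A B => freeFor t x A ∧ freeFor t x B
  | or A B => freeFor t x A ∧ freeFor t x B
  | imp A B => freeFor t x A ∧ freeFor t x B
  | all y A => x = y ∨ x ∉ A.freeVars ∨ (tCount y t = 0 ∧ freeFor t x A)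
  | ex y A => x = y ∨ x ∉ A.freeVars ∨ (tCount y t = 0 ∧ freeFor t x A)

end Fm

/-- The rule Repl, given as the relation between the antecedent of the premiss and the
antecedent of the conclusion (the succedent is unchanged): from
`s = r, P[v/s], P[v/r], Γ ⇒ Δ` infer `s = r, P[v/s], Γ ⇒ Δ`, for `P` atomic and
`v` not occurring in `s, r`. -/
def ReplFull (L : FirstOrder.Language.{u, v}) : Multiset (Fm L) → Multiset (Fm L) → Prop := fun Γp Γc =>
  ∃ (s r : L.Term ℕ) (v : ℕ) (P : Fm L) (Γ : Multiset (Fm L)),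
    P.IsAtomic ∧ tCount v s = 0 ∧ tCount v r = 0 ∧
    Γp = Fm.equal s r ::ₘ P.subst v s ::ₘ P.subst v r ::ₘ Γ ∧
    Γc = Fm.equal s r ::ₘ P.subst v s ::ₘ Γ

/-- The rule Repl⁻: from `s = r, P[v/r], Γ ⇒ Δ` infer `s = r, P[v/s], Γ ⇒ Δ`,
for `P` atomic and `v` not occurring in `s, r`. -/
def ReplMinus (L : FirstOrder.Language.{u, v}) : Multiset (Fm L) → Multiset (Fm L) → Prop := fun Γp Γc =>
  ∃ (s r : L.Term ℕ) (v : ℕ) (P : Fm L) (Γ : Multiset (Fm L)),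
    P.IsAtomic ∧ tCount v s = 0 ∧ tCount v r = 0 ∧
    Γp = Fm.equal s r ::ₘ P.subst v r ::ₘ Γ ∧
    Γc = Fm.equal s r ::ₘ P.subst v s ::ₘ Γ

/-- The rule Repl₁⁻: Repl⁻ restricted to atomic `P` with exactly one occurrence of `v`. -/
def ReplMinus1 (L : FirstOrder.Language.{u, v}) : Multiset (Fm L) → Multiset (Fm L) → Prop := fun Γp Γc =>
  ∃ (s r : L.Term ℕ) (v : ℕ) (P : Fm L) (Γ : Multiset (Fm L)),
    P.IsAtomic ∧ tCount v s = 0 ∧ tCount v r = 0 ∧ Fm.fCount v P = 1 ∧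
    Γp = Fm.equal s r ::ₘ P.subst v r ::ₘ Γ ∧
    Γc = Fm.equal s r ::ₘ P.subst v s ::ₘ Γ

/-- `DerC rp n Γ Δ`: the sequent `Γ ⇒ Δ` has a derivation of height at most `n` in the
classical multisuccedent G3 calculus `G3c` with the equality rule Ref and the
replacement rule given by `rp` (e.g. `ReplFull L` for `G3c^=`, `ReplMinus L` for `G3c^=⁻`,
`ReplMinus1 L` for `G3c₁^=⁻`). -/
inductive DerC (rp : Multiset (Fm L) → Multiset (Fm L) → Prop) :
    ℕ → Multiset (Fm L) → Multiset (Fm L) → Prop where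
  | ax {n : ℕ} {Γ Δ : Multiset (Fm L)} {P : Fm L} (hP : P.IsAtomic) :
      DerC rp n (P ::ₘ Γ) (P ::ₘ Δ)
  | botL {n : ℕ} {Γ Δ : Multiset (Fm L)} : DerC rp n (Fm.falsum ::ₘ Γ) Δ
  | andL {n : ℕ} {Γ Δ : Multiset (Fm L)} {A B : Fm L} :
      DerC rp n (A ::ₘ B ::ₘ Γ) Δ → DerC rp (n + 1) (Fm.and A B ::ₘ Γ) Δ
  | andR {n : ℕ} {Γ Δ : Multiset (Fm L)} {A B : Fm L} :
      DerC rp n Γ (A ::ₘ Δ) → DerC rp n Γ (B ::ₘ Δ) → DerC rp (n + 1) Γ (Fm.and A B ::ₘ Δ)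
  | orL {n : ℕ} {Γ Δ : Multiset (Fm L)} {A B : Fm L} :
      DerC rp n (A ::ₘ Γ) Δ → DerC rp n (B ::ₘ Γ) Δ → DerC rp (n + 1) (Fm.or A B ::ₘ Γ) Δ
  | orR {n : ℕ} {Γ Δ : Multiset (Fm L)} {A B : Fm L} :
      DerC rp n Γ (A ::ₘ B ::ₘ Δ) → DerC rp (n + 1) Γ (Fm.or A B ::ₘ Δ)
  | impL {n : ℕ} {Γ Δ : Multiset (Fm L)} {A B : Fm L} :
      DerC rp n Γ (A ::ₘ Δ) → DerC rp n (B ::ₘ Γ) Δ → DerC rp (n + 1) (Fm.imp A B ::ₘ Γ) Δ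
  | impR {n : ℕ} {Γ Δ : Multiset (Fm L)} {A B : Fm L} :
      DerC rp n (A ::ₘ Γ) (B ::ₘ Δ) → DerC rp (n + 1) Γ (Fm.imp A B ::ₘ Δ)
  | allL {n : ℕ} {Γ Δ : Multiset (Fm L)} {x : ℕ} {t : L.Term ℕ} {A : Fm L}
      (hf : Fm.freeFor t x A) :
      DerC rp n (A.subst x t ::ₘ Fm.all x A ::ₘ Γ) Δ → DerC rp (n + 1) (Fm.all x A ::ₘ Γ) Δ
  | allR {n : ℕ} {Γ Δ : Multiset (Fm L)} {x y : ℕ} {A : Fm L}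
      (hf : Fm.freeFor (Term.var y) x A) (hy : y ∉ (Fm.all x A).freeVars)
      (hΓ : ∀ C ∈ Γ, y ∉ Fm.freeVars C) (hΔ : ∀ C ∈ Δ, y ∉ Fm.freeVars C) :
      DerC rp n Γ (A.subst x (Term.var y) ::ₘ Δ) → DerC rp (n + 1) Γ (Fm.all x A ::ₘ Δ)
  | exL {n : ℕ} {Γ Δ : Multiset (Fm L)} {x y : ℕ} {A : Fm L}
      (hf : Fm.freeFor (Term.var y) x A) (hy : y ∉ (Fm.ex x A).freeVars)
      (hΓ : ∀ C ∈ Γ, y ∉ Fm.freeVars C) (hΔ : ∀ C ∈ Δ, y ∉ Fm.freeVars C) :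
      DerC rp n (A.subst x (Term.var y) ::ₘ Γ) Δ → DerC rp (n + 1) (Fm.ex x A ::ₘ Γ) Δ
  | exR {n : ℕ} {Γ Δ : Multiset (Fm L)} {x : ℕ} {t : L.Term ℕ} {A : Fm L}
      (hf : Fm.freeFor t x A) :
      DerC rp n Γ (A.subst x t ::ₘ Fm.ex x A ::ₘ Δ) → DerC rp (n + 1) Γ (Fm.ex x A ::ₘ Δ)
  | ref {n : ℕ} {Γ Δ : Multiset (Fm L)} (t : L.Term ℕ) :
      DerC rp n (Fm.equal t t ::ₘ Γ) Δ → DerC rp (n + 1) Γ Δ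
  | repl {n : ℕ} {Γp Γc Δ : Multiset (Fm L)} (h : rp Γp Γc) :
      DerC rp n Γp Δ → DerC rp (n + 1) Γc Δ

/-- `DerI rp n Γ Δ`: the sequent `Γ ⇒ Δ` has a derivation of height at most `n` in the
intuitionistic multisuccedent G3 calculus (the right rules for `→` and `∀` have
single-succedent premisses, and L→ repeats its principal formula) with the equality rule
Ref and the replacement rule given by `rp`. -/
inductive DerI (rp : Multiset (Fm L) → Multiset (Fm L) → Prop) :
    ℕ → Multiset (Fm L) → Multiset (Fm L) → Prop where
  | ax {n : ℕ} {Γ Δ : Multiset (Fm L)} {P : Fm L} (hP : P.IsAtomic) :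
      DerI rp n (P ::ₘ Γ) (P ::ₘ Δ)
  | botL {n : ℕ} {Γ Δ : Multiset (Fm L)} : DerI rp n (Fm.falsum ::ₘ Γ) Δ
  | andL {n : ℕ} {Γ Δ : Multiset (Fm L)} {A B : Fm L} :
      DerI rp n (A ::ₘ B ::ₘ Γ) Δ → DerI rp (n + 1) (Fm.and A B ::ₘ Γ) Δ
  | andR {n : ℕ} {Γ Δ : Multiset (Fm L)} {A B : Fm L} :
      DerI rp n Γ (A ::ₘ Δ) → DerI rp n Γ (B ::ₘ Δ) → DerI rp (n + 1) Γ (Fm.and A B ::ₘ Δ)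
  | orL {n : ℕ} {Γ Δ : Multiset (Fm L)} {A B : Fm L} :
      DerI rp n (A ::ₘ Γ) Δ → DerI rp n (B ::ₘ Γ) Δ → DerI rp (n + 1) (Fm.or A B ::ₘ Γ) Δ
  | orR {n : ℕ} {Γ Δ : Multiset (Fm L)} {A B : Fm L} :
      DerI rp n Γ (A ::ₘ B ::ₘ Δ) → DerI rp (n + 1) Γ (Fm.or A B ::ₘ Δ)
  | impL {n : ℕ} {Γ Δ : Multiset (Fm L)} {A B : Fm L} :
      DerI rp n (Fm.imp A B ::ₘ Γ) (A ::ₘ Δ) → DerI rp n (B ::ₘ Γ) Δ →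
      DerI rp (n + 1) (Fm.imp A B ::ₘ Γ) Δ
  | impR {n : ℕ} {Γ Δ : Multiset (Fm L)} {A B : Fm L} :
      DerI rp n (A ::ₘ Γ) {B} → DerI rp (n + 1) Γ (Fm.imp A B ::ₘ Δ)
  | allL {n : ℕ} {Γ Δ : Multiset (Fm L)} {x : ℕ} {t : L.Term ℕ} {A : Fm L}
      (hf : Fm.freeFor t x A) :
      DerI rp n (A.subst x t ::ₘ Fm.all x A ::ₘ Γ) Δ → DerI rp (n + 1) (Fm.all x A ::ₘ Γ) Δ
  | allR {n : ℕ} {Γ Δ : Multiset (Fm L)} {x y : ℕ} {A : Fm L}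
      (hf : Fm.freeFor (Term.var y) x A) (hy : y ∉ (Fm.all x A).freeVars)
      (hΓ : ∀ C ∈ Γ, y ∉ Fm.freeVars C) :
      DerI rp n Γ {A.subst x (Term.var y)} → DerI rp (n + 1) Γ (Fm.all x A ::ₘ Δ)
  | exL {n : ℕ} {Γ Δ : Multiset (Fm L)} {x y : ℕ} {A : Fm L}
      (hf : Fm.freeFor (Term.var y) x A) (hy : y ∉ (Fm.ex x A).freeVars)
      (hΓ : ∀ C ∈ Γ, y ∉ Fm.freeVars C) (hΔ : ∀ C ∈ Δ, y ∉ Fm.freeVars C) :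
      DerI rp n (A.subst x (Term.var y) ::ₘ Γ) Δ → DerI rp (n + 1) (Fm.ex x A ::ₘ Γ) Δ
  | exR {n : ℕ} {Γ Δ : Multiset (Fm L)} {x : ℕ} {t : L.Term ℕ} {A : Fm L}
      (hf : Fm.freeFor t x A) :
      DerI rp n Γ (A.subst x t ::ₘ Fm.ex x A ::ₘ Δ) → DerI rp (n + 1) Γ (Fm.ex x A ::ₘ Δ)
  | ref {n : ℕ} {Γ Δ : Multiset (Fm L)} (t : L.Term ℕ) :
      DerI rp n (Fm.equal t t ::ₘ Γ) Δ → DerI rp (n + 1) Γ Δ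
  | repl {n : ℕ} {Γp Γc Δ : Multiset (Fm L)} (h : rp Γp Γc) :
      DerI rp n Γp Δ → DerI rp (n + 1) Γc Δ


/-- One application of the rule Repl₁⁻, as a relation on sequents
(premiss to conclusion). -/
def Repl1MinusStep (L : FirstOrder.Language.{u, v})
    (S S' : Multiset (Fm L) × Multiset (Fm L)) : Prop :=
  ReplMinus1 L S.1 S'.1 ∧ S.2 = S'.2

/-- `iterRel R n a b`: `b` is obtained from `a` by exactly `n` applications of `R`. -/
def iterRel {α : Type*} (R : α → α → Prop) : ℕ → α → α → Prop
  | 0 => fun a b => a = b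
  | n + 1 => fun a c => ∃ b, R a b ∧ iterRel R n b c

/-
To replace all `n` occurrences of `r` in `P[v/r]` one at a time, mark one occurrence of `v`
in `P` by a fresh variable `w`: `P = Q[w/v]` with `Q` atomic, `w` occurring once and `v`
occurring `n - 1` times in `Q`. Then `P[v/r] = Q[v/r][w/r]`, one application of Repl₁⁻ (to
the atom `Q[v/r]` and the variable `w`) yields `Q[v/r][w/s] = Q[w/s][v/r]`, and induction
on `n` applied to `Q[w/s]` reaches `Q[w/s][v/s] = P[v/s]`.
-/

open Function Filter

theorem Finset.sum_apply_update_add {ι α M : Type*} [Fintype ι] [DecidableEq ι]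
    [AddCommMonoid M] (g : α → M) (f : ι → α) (i : ι) (b : α) :
    ∑ j, g (update f i b j) + g (f i) = ∑ j, g (f j) + g b := by
  simp only [apply_update (fun _ => g)]
  rw [Finset.sum_update_of_mem (Finset.mem_univ i),
    Finset.sum_eq_add_sum_sdiff_singleton_of_mem (Finset.mem_univ i)]
  abel

namespace FirstOrder.Language.Term

theorem subst_subst (σ τ : ℕ → L.Term ℕ) :
    ∀ t : L.Term ℕ, (t.subst σ).subst τ = t.subst fun x => (σ x).subst τ
  | var _ => rfl
  | func f ts => congrArg (func f) (funext fun i => subst_subst σ τ (ts i))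

theorem subst_update_of_tCount_eq_zero {w : ℕ} {u : L.Term ℕ} :
    ∀ {t : L.Term ℕ}, tCount w t = 0 → t.subst (update var w u) = t
  | var x, h => by
    have hx : x ≠ w := by rintro rfl; simp [tCount] at h
    simp [subst, hx]
  | func f ts, h => by
    simp only [tCount, Finset.sum_eq_zero_iff, Finset.mem_univ, true_implies] at h
    exact congrArg (func f) (funext fun i => subst_update_of_tCount_eq_zero (h i))

theorem subst_update_comm_apply {w v : ℕ} (hwv : w ≠ v) {u a : L.Term ℕ}
    (hwa : tCount w a = 0) (x : ℕ) :
    (update var w u x).subst (update var v a) =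
      (update var v a x).subst (update var w (u.subst (update var v a))) := by
  rcases eq_or_ne x w with rfl | hxw
  · simp [subst, hwv]
  rcases eq_or_ne x v with rfl | hxv
  · simp [subst, hxw, subst_update_of_tCount_eq_zero hwa]
  · simp [subst, hxw, hxv]

end FirstOrder.Language.Term

theorem tCount_subst_update_of_ne {a w : ℕ} (haw : a ≠ w) {u : L.Term ℕ}
    (hu : tCount a u = 0) :
    ∀ t : L.Term ℕ, tCount a (t.subst (update Term.var w u)) = tCount a t
  | .var x => by
    rcases eq_or_ne x w with rfl | hxw
    · simp [Term.subst, tCount, hu, haw.symm]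
    · simp [Term.subst, hxw]
  | .func f ts => Finset.sum_congr rfl fun i _ => tCount_subst_update_of_ne haw hu (ts i)

theorem eventually_tCount_eq_zero : ∀ t : L.Term ℕ, ∀ᶠ w in cofinite, tCount w t = 0
  | .var x => (eventually_cofinite_ne x).mono fun w hw => by simp [tCount, hw.symm]
  | .func f ts => (eventually_all.2 fun i => eventually_tCount_eq_zero (ts i)).mono
      fun _ hw => Finset.sum_eq_zero fun i _ => hw i

def MarksOccurrence (v w : ℕ) (t' t : L.Term ℕ) : Prop :=
  tCount v t' + 1 = tCount v t ∧ tCount w t' = 1 ∧ t'.subst (update Term.var w (Term.var v)) = t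

theorem exists_tuple_marksOccurrence {v w l : ℕ} {ts : Fin l → L.Term ℕ}
    (hv : ∑ j, tCount v (ts j) ≠ 0) (hw : ∑ j, tCount w (ts j) = 0)
    (hmark : ∀ i, tCount v (ts i) ≠ 0 → tCount w (ts i) = 0 →
      ∃ t', MarksOccurrence v w t' (ts i)) :
    ∃ ts' : Fin l → L.Term ℕ, ∑ j, tCount v (ts' j) + 1 = ∑ j, tCount v (ts j) ∧
      ∑ j, tCount w (ts' j) = 1 ∧
      (fun j => (ts' j).subst (update Term.var w (Term.var v))) = ts := by
  obtain ⟨i, -, hi⟩ := Finset.exists_ne_zero_of_sum_ne_zero hv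
  replace hw : ∀ j, tCount w (ts j) = 0 := by simpa using hw
  obtain ⟨t', hv', hw', ht'⟩ := hmark i hi (hw i)
  have sum_v := Finset.sum_apply_update_add (tCount v) ts i t'
  have sum_w := Finset.sum_apply_update_add (tCount w) ts i t'
  refine ⟨update ts i t', by omega, by simp_all, funext fun j => ?_⟩
  rcases eq_or_ne j i with rfl | hji
  · simpa using ht'
  · simpa [hji] using Term.subst_update_of_tCount_eq_zero (hw j)

theorem exists_marksOccurrence {v w : ℕ} (hwv : w ≠ v) :
    ∀ t : L.Term ℕ, tCount v t ≠ 0 → tCount w t = 0 → ∃ t', MarksOccurrence v w t' t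
  | .var x, hv, _ => by
    obtain rfl : x = v := by by_contra h; simp [tCount, h] at hv
    exact ⟨.var w, by simp [tCount, hwv], by simp [tCount], by simp [Term.subst]⟩
  | .func f ts, hv, hw => by
    obtain ⟨ts', hv', hw', hsubst⟩ := exists_tuple_marksOccurrence hv hw
      fun i => exists_marksOccurrence hwv (ts i)
    exact ⟨.func f ts', hv', hw', congrArg (Term.func f) hsubst⟩

namespace Fm.IsAtomic

variable {P : Fm L}

theorem ssub (hP : P.IsAtomic) (σ : ℕ → L.Term ℕ) : (P.ssub σ).IsAtomic := by
  cases hP <;> constructor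

theorem ssub_ssub (hP : P.IsAtomic) (σ τ : ℕ → L.Term ℕ) :
    (P.ssub σ).ssub τ = P.ssub fun x => (σ x).subst τ := by
  cases hP <;> simp only [Fm.ssub, Term.subst_subst]

theorem subst_subst_comm (hP : P.IsAtomic) {w v : ℕ} (hwv : w ≠ v) {u a : L.Term ℕ}
    (hwa : tCount w a = 0) :
    (P.subst w u).subst v a = (P.subst v a).subst w (u.subst (update Term.var v a)) := by
  simp only [Fm.subst, hP.ssub_ssub, Term.subst_update_comm_apply hwv hwa]

theorem subst_eq_self (hP : P.IsAtomic) {w : ℕ} (h : fCount w P = 0) (u : L.Term ℕ) :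
    P.subst w u = P := by
  cases hP with
  | equal t₁ t₂ =>
    simp only [fCount, Nat.add_eq_zero_iff] at h
    simp only [Fm.subst, Fm.ssub, Term.subst_update_of_tCount_eq_zero h.1,
      Term.subst_update_of_tCount_eq_zero h.2]
  | rel R ts =>
    simp only [fCount, Finset.sum_eq_zero_iff, Finset.mem_univ, true_implies] at h
    simp only [Fm.subst, Fm.ssub, Term.subst_update_of_tCount_eq_zero (h _)]

theorem fCount_subst_of_ne (hP : P.IsAtomic) {a w : ℕ} (haw : a ≠ w) {u : L.Term ℕ}
    (hu : tCount a u = 0) : fCount a (P.subst w u) = fCount a P := by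
  cases hP <;> simp only [Fm.subst, Fm.ssub, fCount, tCount_subst_update_of_ne haw hu]

theorem eventually_fCount_eq_zero (hP : P.IsAtomic) : ∀ᶠ w in cofinite, fCount w P = 0 := by
  cases hP with
  | equal t₁ t₂ =>
    filter_upwards [eventually_tCount_eq_zero t₁, eventually_tCount_eq_zero t₂] with w h₁ h₂
    simp [fCount, h₁, h₂]
  | rel R ts =>
    filter_upwards [eventually_all.2 fun i => eventually_tCount_eq_zero (ts i)] with w h
    exact Finset.sum_eq_zero fun i _ => h i

theorem exists_subst_var_eq (hP : P.IsAtomic) {v w : ℕ} (hwv : w ≠ v) (hv : fCount v P ≠ 0)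
    (hw : fCount w P = 0) :
    ∃ Q : Fm L, Q.IsAtomic ∧ fCount v Q + 1 = fCount v P ∧ fCount w Q = 1 ∧
      Q.subst w (.var v) = P := by
  cases hP with
  | equal t₁ t₂ =>
    simp only [fCount, Nat.add_eq_zero_iff] at hv hw
    by_cases h₁ : tCount v t₁ = 0
    · obtain ⟨t', hv', hw', ht'⟩ := exists_marksOccurrence hwv t₂ (by omega) hw.2
      refine ⟨.equal t₁ t', .equal _ _, by simp only [fCount]; omega,
        by simp [fCount, hw.1, hw'], ?_⟩
      simp [Fm.subst, Fm.ssub, ht', Term.subst_update_of_tCount_eq_zero hw.1]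
    · obtain ⟨t', hv', hw', ht'⟩ := exists_marksOccurrence hwv t₁ h₁ hw.1
      refine ⟨.equal t' t₂, .equal _ _, by simp only [fCount]; omega,
        by simp [fCount, hw.2, hw'], ?_⟩
      simp [Fm.subst, Fm.ssub, ht', Term.subst_update_of_tCount_eq_zero hw.2]
  | rel R ts =>
    obtain ⟨ts', hv', hw', hsubst⟩ := exists_tuple_marksOccurrence hv hw
      fun i => exists_marksOccurrence hwv (ts i)
    exact ⟨.rel R ts', .rel _ _, hv', hw', congrArg (Fm.rel R) hsubst⟩

end Fm.IsAtomic

theorem replMinus_derivable_from_repl1Minus_general (L : FirstOrder.Language.{u, v})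
    (P : Fm L) (hP : P.IsAtomic) (s r : L.Term ℕ) (v : ℕ)
    (hs : tCount v s = 0) (Γ Δ : Multiset (Fm L)) :
    iterRel (Repl1MinusStep L) (Fm.fCount v P)
      (Fm.equal s r ::ₘ P.subst v r ::ₘ Γ, Δ)
      (Fm.equal s r ::ₘ P.subst v s ::ₘ Γ, Δ) := by
  induction hn : P.fCount v generalizing P with
  | zero => exact congrArg₂ _ (by rw [hP.subst_eq_self hn, hP.subst_eq_self hn]) rfl
  | succ n ih =>
    obtain ⟨w, hwv, hws, hwr, hwP⟩ := ((eventually_cofinite_ne v).and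
      ((eventually_tCount_eq_zero s).and ((eventually_tCount_eq_zero r).and
        hP.eventually_fCount_eq_zero))).exists
    obtain ⟨Q, hQ, hQv, hQw, rfl⟩ := hP.exists_subst_var_eq hwv (by omega) hwP
    have hs' (a : L.Term ℕ) : s.subst (update Term.var v a) = s :=
      Term.subst_update_of_tCount_eq_zero hs
    have step : Repl1MinusStep L (Fm.equal s r ::ₘ (Q.subst w (.var v)).subst v r ::ₘ Γ, Δ)
        (Fm.equal s r ::ₘ (Q.subst w s).subst v r ::ₘ Γ, Δ) :=
      ⟨⟨s, r, w, Q.subst v r, Γ, hQ.ssub _, hws, hwr,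
        by rwa [hQ.fCount_subst_of_ne hwv hwr], by simp [hQ.subst_subst_comm hwv hwr, Term.subst],
        by simp [hQ.subst_subst_comm hwv hwr, hs']⟩, rfl⟩
    have rest := ih (Q.subst w s) (hQ.ssub _) (by rw [hQ.fCount_subst_of_ne hwv.symm hs]; omega)
    exact ⟨_, step, by simpa [hQ.subst_subst_comm hwv hws, hs', Term.subst] using rest⟩

/-- In the calculus consisting solely of the rule Repl₁⁻, the rule Repl⁻ is derivable:
for every atomic formula `P`, terms `s`, `r`, variable `v` not occurring in `s` or `r`,
and finite multisets `Γ`, `Δ`, the sequent `s = r, P[v/s], Γ ⇒ Δ` is obtained from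
`s = r, P[v/r], Γ ⇒ Δ` by finitely many applications of Repl₁⁻, the number of
applications being the number of occurrences of `v` in `P`. -/
theorem replMinus_derivable_from_repl1Minus (L : FirstOrder.Language.{u, v})
    (P : Fm L) (hP : P.IsAtomic) (s r : L.Term ℕ) (v : ℕ)
    (hs : tCount v s = 0) (hr : tCount v r = 0) (Γ Δ : Multiset (Fm L)) :
    iterRel (Repl1MinusStep L) (Fm.fCount v P)
      (Fm.equal s r ::ₘ P.subst v r ::ₘ Γ, Δ)
      (Fm.equal s r ::ₘ P.subst v s ::ₘ Γ, Δ) :=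
  replMinus_derivable_from_repl1Minus_general L P hP s r v hs Γ Δ
end

section
/- The contraction rule for equalities, Contr^=, is derivable in G3c₁^=⁻: for all terms s, r and finite multisets Γ, Δ of formulas, the sequent s = r, Γ ⇒ Δ can be derived from the sequent s = r, s = r, Γ ⇒ Δ by one application of Repl₁⁻ followed by one application of Ref. -/
open FirstOrder Language Multiset

universe u v

variable {L : FirstOrder.Language.{u, v}}

lemma tCount_eq_zero_of_notMem_varFinset {v : ℕ} :
    ∀ {t : L.Term ℕ}, v ∉ t.varFinset → tCount v t = 0
  | .var w, h => by
      simp only [Term.varFinset, Finset.mem_singleton] at h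
      simp [tCount, Ne.symm h]
  | .func _ ts, h => by
      simp only [Term.varFinset, Finset.mem_biUnion, Finset.mem_univ, true_and, not_exists] at h
      exact Finset.sum_eq_zero fun i _ => tCount_eq_zero_of_notMem_varFinset (h i)

lemma exists_tCount_eq_zero (s r : L.Term ℕ) : ∃ v, tCount v s = 0 ∧ tCount v r = 0 := by
  classical
  obtain ⟨v, hv⟩ := (s.varFinset ∪ r.varFinset).exists_notMem
  rw [Finset.mem_union, not_or] at hv
  exact ⟨v, tCount_eq_zero_of_notMem_varFinset hv.1, tCount_eq_zero_of_notMem_varFinset hv.2⟩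

lemma subst_update_var_eq_self_of_tCount_eq_zero {v : ℕ} {u : L.Term ℕ} :
    ∀ {t : L.Term ℕ}, tCount v t = 0 → t.subst (Function.update Term.var v u) = t
  | .var w, h => by
      simp only [tCount, ite_eq_right_iff, one_ne_zero, imp_false] at h
      simp [Term.subst, Function.update, h]
  | .func _ ts, h => by
      simp only [tCount, Finset.sum_eq_zero_iff, Finset.mem_univ, forall_const] at h
      simp only [Term.subst]
      exact congrArg _ (funext fun i => subst_update_var_eq_self_of_tCount_eq_zero (h i))

namespace Fm

lemma subst_equal_var {v : ℕ} {s : L.Term ℕ} (hs : tCount v s = 0) (t : L.Term ℕ) :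
    (equal s (Term.var v)).subst v t = equal s t := by
  simp [subst, ssub, subst_update_var_eq_self_of_tCount_eq_zero hs, Term.subst]

lemma fCount_equal_var {v : ℕ} {s : L.Term ℕ} (hs : tCount v s = 0) :
    (equal s (Term.var v)).fCount v = 1 := by
  simp [fCount, tCount, hs]

end Fm

/-- The instance at the atom `s = v` with `v` fresh: `(s = v)[v/r]` is `s = r` and
`(s = v)[v/s]` is `s = s`. -/
lemma replMinus1_equal_self (s r : L.Term ℕ) (Γ : Multiset (Fm L)) :
    ReplMinus1 L (Fm.equal s r ::ₘ Fm.equal s r ::ₘ Γ) (Fm.equal s r ::ₘ Fm.equal s s ::ₘ Γ) := by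
  obtain ⟨v, hvs, hvr⟩ := exists_tCount_eq_zero s r
  refine ⟨s, r, v, Fm.equal s (Term.var v), Γ, .equal _ _, hvs, hvr, Fm.fCount_equal_var hvs,
    ?_, ?_⟩ <;> rw [Fm.subst_equal_var hvs]

/-- The contraction rule for equalities Contr^= is derivable in `G3c₁^=⁻`: from a
derivation of `s = r, s = r, Γ ⇒ Δ` one obtains a derivation of `s = r, Γ ⇒ Δ` by one
application of Repl₁⁻ followed by one application of Ref (hence with height increased
by two). -/
theorem contrEq_derivable_G3c1EqMinus (L : FirstOrder.Language.{u, v})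
    (s r : L.Term ℕ) (Γ Δ : Multiset (Fm L)) (n : ℕ)
    (hd : DerC (ReplMinus1 L) n (Fm.equal s r ::ₘ Fm.equal s r ::ₘ Γ) Δ) :
    DerC (ReplMinus1 L) (n + 2) (Fm.equal s r ::ₘ Γ) Δ := by
  have hrepl : DerC (ReplMinus1 L) (n + 1) (Fm.equal s r ::ₘ Fm.equal s s ::ₘ Γ) Δ :=
    .repl (replMinus1_equal_self s r Γ) hd
  exact .ref s (Multiset.cons_swap _ _ _ ▸ hrepl)
end
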